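/- Let γ ∈ ℝ and σ > 0, and let φ be a solution of the DNLS lattice with power nonlinearity on [0,T_f]. Then the ℓ²-norm is conserved: ‖φ(t)‖_{ℓ²} = ‖φ(0)‖_{ℓ²} for all t ∈ [0,T_f]. -/

import Mathlib

noncomputable section

open Set

/-- The sequence space ℓ²(ℤ,ℂ). -/
abbrev Seq2 := lp (fun _ : ℤ => ℂ) 2


/-- `φ` is a solution of the DNLS lattice with power nonlinearity on `[0,Tf]`:
a continuously differentiable curve into ℓ²(ℤ,ℂ) satisfying
`i dφ_n/dt = (φ_{n+1} − 2φ_n + φ_{n−1}) + γ|φ_n|^{2σ}φ_n` componentwise. -/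
def IsDNLSSolution (γ σ Tf : ℝ) (φ : ℝ → Seq2) : Prop :=
  ∃ φdot : ℝ → Seq2, ContinuousOn φdot (Icc 0 Tf) ∧
    ∀ t ∈ Icc (0:ℝ) Tf,
      HasDerivWithinAt φ (φdot t) (Icc 0 Tf) t ∧
      ∀ n : ℤ, Complex.I * φdot t n =
        (φ t (n+1) - 2 * φ t n + φ t (n-1))
          + (γ : ℂ) * (‖φ t n‖ ^ (2*σ) : ℝ) * φ t n

/-!
The mass `‖φ‖²` has derivative `2⟪φ, φ'⟫_ℝ`, and this vanishes along the DNLS field: the real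
on-site term `c_n φ_n` contributes `Re(i c_n |φ_n|²) = 0`, while the hopping terms contribute
`g_n − g_{n−1}` with bond currents `g_n = Im(φ̄_n φ_{n+1})`, which telescope to zero because
`g` is summable for `φ ∈ ℓ²`.
-/

open ComplexConjugate

theorem norm_eq_of_hasDerivWithinAt_of_inner_eq_zero {F : Type*} [NormedAddCommGroup F]
    [InnerProductSpace ℝ F] {φ φ' : ℝ → F} {a b : ℝ}
    (hφ : ∀ t ∈ Icc a b, HasDerivWithinAt φ (φ' t) (Icc a b) t)
    (horth : ∀ t ∈ Icc a b, inner ℝ (φ t) (φ' t) = 0) :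
    ∀ t ∈ Icc a b, ‖φ t‖ = ‖φ a‖ := by
  have hcont : ContinuousOn (‖φ ·‖ ^ 2) (Icc a b) := fun t ht =>
    (hφ t ht).norm_sq.continuousWithinAt
  have hderiv : ∀ t ∈ Ico a b, HasDerivWithinAt (‖φ ·‖ ^ 2) 0 (Ici t) t := fun t ht => by
    simpa [horth t (Ico_subset_Icc_self ht)] using
      ((hφ t (Ico_subset_Icc_self ht)).mono_of_mem_nhdsWithin (Icc_mem_nhdsGE_of_mem ht)).norm_sq
  intro t ht
  have := constant_of_has_deriv_right_zero hcont hderiv t ht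
  exact (pow_left_inj₀ (norm_nonneg _) (norm_nonneg _) two_ne_zero).1 this

theorem lp.summable_norm_sq {ι : Type*} {E : ι → Type*} [∀ i, NormedAddCommGroup (E i)]
    (u : lp E 2) : Summable fun i => ‖u i‖ ^ 2 := by
  simpa using (lp.memℓp u).summable (by norm_num : 0 < (2 : ENNReal).toReal)

theorem lp.summable_inner_comp_equiv {ι 𝕜 E : Type*} [RCLike 𝕜] [NormedAddCommGroup E]
    [InnerProductSpace 𝕜 E] (u v : lp (fun _ : ι => E) 2) (e : ι ≃ ι) :
    Summable fun i => inner 𝕜 (u i) (v (e i)) := by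
  refine .of_norm_bounded ((lp.summable_norm_sq u).add
    (e.summable_iff.2 (lp.summable_norm_sq v))) fun i => ?_
  change _ ≤ ‖u i‖ ^ 2 + ‖v (e i)‖ ^ 2
  have := norm_inner_le_norm (𝕜 := 𝕜) (u i) (v (e i))
  nlinarith [sq_nonneg (‖u i‖ - ‖v (e i)‖), norm_nonneg (u i), norm_nonneg (v (e i))]

theorem tsum_sub_int_pred_eq_zero {G : Type*} [AddCommGroup G] [TopologicalSpace G]
    [IsTopologicalAddGroup G] [T2Space G] {g : ℤ → G} (hg : Summable g) :
    ∑' n, (g n - g (n - 1)) = 0 := by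
  have hg' : Summable fun n => g (n - 1) := (Equiv.subRight 1).summable_iff.2 hg
  exact (hg.tsum_sub hg').trans (sub_eq_zero.2 ((Equiv.subRight 1).tsum_eq g).symm)

theorem Complex.re_conj_mul_eq_of_I_mul_eq {a d p q : ℂ} {c : ℝ}
    (h : I * d = p - 2 * a + q + c * a) :
    (conj a * d).re = (conj a * p).im - (conj q * a).im := by
  simp only [Complex.ext_iff, mul_re, mul_im, I_re, I_im, sub_re, sub_im, add_re, add_im,
    ofReal_re, ofReal_im, conj_re, conj_im, re_ofNat, im_ofNat] at h ⊢
  linear_combination a.re * h.2 - a.im * h.1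

theorem inner_eq_zero_of_I_mul_eq_laplacian_add_real_mul (u d : lp (fun _ : ℤ => ℂ) 2)
    (c : ℤ → ℝ) (h : ∀ n, Complex.I * d n = u (n + 1) - 2 * u n + u (n - 1) + c n * u n) :
    inner ℝ u d = 0 := by
  set g : ℤ → ℝ := fun n => (inner ℂ (u n) (u (n + 1))).im
  have hg : Summable g := Complex.imCLM.summable (lp.summable_inner_comp_equiv u u (.addRight 1))
  calc inner ℝ u d = ∑' n, inner ℝ (u n) (d n) := lp.inner_eq_tsum u d
    _ = ∑' n, (g n - g (n - 1)) := tsum_congr fun n => by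
        simp only [g, Complex.inner, RCLike.inner_apply', sub_add_cancel, mul_comm (d n)]
        exact Complex.re_conj_mul_eq_of_I_mul_eq (h n)
    _ = 0 := tsum_sub_int_pred_eq_zero hg

theorem dnls_l2_norm_conserved_general (γ σ Tf : ℝ)
    (φ : ℝ → Seq2) (hφ : IsDNLSSolution γ σ Tf φ) :
    ∀ t ∈ Icc (0:ℝ) Tf, ‖φ t‖ = ‖φ 0‖ := by
  obtain ⟨φ', -, hsol⟩ := hφ
  refine norm_eq_of_hasDerivWithinAt_of_inner_eq_zero (fun t ht => (hsol t ht).1) fun t ht => ?_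
  refine inner_eq_zero_of_I_mul_eq_laplacian_add_real_mul _ _ (fun n => γ * ‖φ t n‖ ^ (2 * σ))
    fun n => ?_
  rw [(hsol t ht).2 n, Complex.ofReal_mul]

/-- Conservation of the ℓ²-norm along solutions of the DNLS lattice with power
nonlinearity: `‖φ(t)‖ = ‖φ(0)‖` for all `t ∈ [0,Tf]`. -/
theorem dnls_l2_norm_conserved (γ σ Tf : ℝ) (hσ : 0 < σ)
    (φ : ℝ → Seq2) (hφ : IsDNLSSolution γ σ Tf φ) :
    ∀ t ∈ Icc (0:ℝ) Tf, ‖φ t‖ = ‖φ 0‖ :=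
  dnls_l2_norm_conserved_general γ σ Tf φ hφ
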